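/- Let 0 < α < n and let q(·): ℝⁿ → (0,∞) be a measurable exponent with 0 < q₋ ≤ q₊ < ∞. If ω ∈ 𝒲_{q(·)} and p(·) is defined by 1/p(x) = 1/q(x) + α/n, then ω ∈ 𝒲_{p(·)}; moreover s_{ω,p(·)} ≤ s_{ω,q(·)} + α/n. -/

import Mathlib

open MeasureTheory ENNReal Set

noncomputable section

/-- Euclidean space `ℝⁿ`. -/
abbrev Rn (n : ℕ) := EuclideanSpace ℝ (Fin n)

variable {n : ℕ}

/-- The (closed) cube centered at `z` with side length `r`. -/
def cube (z : Rn n) (r : ℝ) : Set (Rn n) := {x | ∀ i, |x i - z i| ≤ r / 2}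

/-- Luxemburg quasi-norm with variable exponent `p`, for an `ℝ≥0∞`-valued function `f`. -/
def luxNorm (p : Rn n → ℝ) (f : Rn n → ℝ≥0∞) : ℝ≥0∞ :=
  sInf {lam : ℝ≥0∞ | ∫⁻ x, (f x / lam) ^ (p x) ≤ 1}

/-- Weighted variable Lebesgue quasi-norm `‖f‖_{L^{p(·)}_ω} = ‖fω‖_{L^{p(·)}}`,
`ℝ≥0∞`-valued version. -/
def wnorm (p : Rn n → ℝ) (ω : Rn n → ℝ) (f : Rn n → ℝ≥0∞) : ℝ≥0∞ :=
  luxNorm p (fun x => f x * ENNReal.ofReal (ω x))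

/-- Weighted variable Lebesgue quasi-norm of a real valued function. -/
def wnormR (p : Rn n → ℝ) (ω : Rn n → ℝ) (f : Rn n → ℝ) : ℝ≥0∞ :=
  wnorm p ω (fun x => ENNReal.ofReal |f x|)

/-- `p₋`, the essential infimum of an exponent. -/
def eInf (p : Rn n → ℝ) : ℝ≥0∞ := essInf (fun x => ENNReal.ofReal (p x)) volume

/-- `p₊`, the essential supremum of an exponent. -/
def eSup (p : Rn n → ℝ) : ℝ≥0∞ := essSup (fun x => ENNReal.ofReal (p x)) volume

/-- A weight: a locally integrable function, positive (and finite) a.e. -/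
def IsWeight (ω : Rn n → ℝ) : Prop :=
  LocallyIntegrable ω volume ∧ ∀ᵐ x ∂(volume : Measure (Rn n)), 0 < ω x

/-- The fractional maximal operator `M_β` (for `β = 0`, the Hardy–Littlewood
maximal operator). -/
def fracMax (β : ℝ) (f : Rn n → ℝ) (x : Rn n) : ℝ≥0∞ :=
  ⨆ (z : Rn n) (r : ℝ) (_ : 0 < r) (_ : x ∈ cube z r),
    (volume (cube z r)) ^ (β / n - 1) * ∫⁻ y in cube z r, ENNReal.ofReal |f y|

/-- Pointwise conjugate exponent `t' = t/(t-1)`. -/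
def conjExp (t : ℝ) : ℝ := t / (t - 1)

/-- Boundedness of the Hardy–Littlewood maximal operator on `L^{ρ(·)}_ν`. -/
def MaxBounded (ρ : Rn n → ℝ) (ν : Rn n → ℝ) : Prop :=
  ∃ C : ℝ, 0 < C ∧ ∀ f : Rn n → ℝ, Measurable f →
    wnorm ρ ν (fracMax 0 f) ≤ ENNReal.ofReal C * wnormR ρ ν f

/-- The weight class `𝒲_{p(·)}`. -/
def WClass (p : Rn n → ℝ) (ω : Rn n → ℝ) : Prop :=
  IsWeight ω ∧
  (∃ ps : ℝ, 0 < ps ∧ ENNReal.ofReal ps < min 1 (eInf p) ∧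
    ∀ (z : Rn n) (r : ℝ), 0 < r →
      wnormR (fun x => p x / ps) (fun x => ω x ^ ps) ((cube z r).indicator 1) < ⊤ ∧
      wnormR (fun x => conjExp (p x / ps)) (fun x => ω x ^ (-ps)) ((cube z r).indicator 1) < ⊤) ∧
  (∃ κ s : ℝ, 1 < κ ∧ max 1 (eInf p)⁻¹ < ENNReal.ofReal s ∧
    MaxBounded (fun x => conjExp (s * p x) / κ) (fun x => ω x ^ (-(κ / s))))

/-- The index `s_{ω,p(·)}`. -/
def sIndex (p : Rn n → ℝ) (ω : Rn n → ℝ) : ℝ :=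
  sInf {s : ℝ | max 1 (eInf p)⁻¹ < ENNReal.ofReal s ∧
    MaxBounded (fun x => conjExp (s * p x)) (fun x => ω x ^ (-(1 / s)))}

/-- Partial derivative in the direction `i`. -/
def pderiv1 (i : Fin n) (f : Rn n → ℝ) : Rn n → ℝ :=
  fun x => fderiv ℝ f x (EuclideanSpace.single i (1 : ℝ))

/-- Iterated partial derivatives along a list of directions. -/
def iterDeriv (f : Rn n → ℝ) : List (Fin n) → (Rn n → ℝ)
  | [] => f
  | i :: l => pderiv1 i (iterDeriv f l)

/-- `∂^β f` for a multi-index `β`. -/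
def mderiv (β : Fin n → ℕ) (f : Rn n → ℝ) : Rn n → ℝ :=
  iterDeriv f ((List.finRange n).flatMap fun i => List.replicate (β i) i)

/-- The finset of multi-indices of total degree `≤ N`. -/
def multiIndicesLe (n N : ℕ) : Finset (Fin n → ℕ) :=
  (Fintype.piFinset fun _ : Fin n => Finset.range (N + 1)).filter
    fun β => (∑ i, β i) ≤ N

/-- The Schwartz seminorm `Σ_{|β| ≤ N} sup_x (1+|x|)^N |∂^β φ(x)|`. -/
def schSemi (N : ℕ) (φ : Rn n → ℝ) : ℝ :=
  ∑ β ∈ multiIndicesLe n N, ⨆ x : Rn n, (1 + ‖x‖) ^ N * |mderiv β φ x|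

/-- The grand maximal function `𝓜_N f` of a function `f`,
`𝓜_N f(x) = sup_{t>0} sup_{φ ∈ 𝓕_N} |(φ_t * f)(x)|`. -/
def grandMax (N : ℕ) (f : Rn n → ℝ) (x : Rn n) : ℝ≥0∞ :=
  ⨆ (t : ℝ) (_ : 0 < t) (φ : SchwartzMap (Rn n) ℝ) (_ : schSemi N (fun y => φ y) ≤ 1),
    ENNReal.ofReal |∫ y : Rn n, (t ^ n)⁻¹ * φ (t⁻¹ • (x - y)) * f y|

/-- The Riesz potential `I_α f(x) = ∫ f(y) |x-y|^{α-n} dy`. -/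
def riesz (α : ℝ) (f : Rn n → ℝ) (x : Rn n) : ℝ :=
  ∫ y : Rn n, f y * ‖x - y‖ ^ (α - (n : ℝ))

/-- All moments vanish (membership in `𝒮₀`). -/
def momentsVanish (φ : Rn n → ℝ) : Prop :=
  ∀ β : Fin n → ℕ, ∫ x : Rn n, (∏ i, x i ^ β i) * φ x = 0

/-- The log-Hölder continuity class `𝒫^log`. -/
def PLog (p : Rn n → ℝ) : Prop :=
  (∃ C : ℝ, 0 < C ∧ ∀ x y : Rn n, dist x y ≤ 1 / 2 →
    |p x - p y| ≤ C / (-Real.log (dist x y))) ∧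
  (∃ Cinf pinf : ℝ, 0 < Cinf ∧ ∀ x : Rn n,
    |p x - pinf| ≤ Cinf / Real.log (Real.exp 1 + ‖x‖))

/-- The degree-`N` Taylor polynomial of `g` around `z`, evaluated at `y`. -/
def taylorPoly (N : ℕ) (g : Rn n → ℝ) (z y : Rn n) : ℝ :=
  ∑ β ∈ multiIndicesLe n N,
    (((∏ i, (β i).factorial : ℕ) : ℝ))⁻¹ * mderiv β g z * ∏ i, (y i - z i) ^ β i

/-- An `ω-(p(·), p₀, N)` atom supported on `cube z r`. -/
def IsAtomOn (p : Rn n → ℝ) (ω : Rn n → ℝ) (p₀ : ℝ) (N : ℕ)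
    (a : Rn n → ℝ) (z : Rn n) (r : ℝ) : Prop :=
  (∀ x, x ∉ cube z r → a x = 0) ∧
  eLpNorm a (ENNReal.ofReal p₀) volume ≤
    volume (cube z r) ^ (1 / p₀) / wnormR p ω ((cube z r).indicator 1) ∧
  ∀ β : Fin n → ℕ, (∑ i, β i) ≤ N → ∫ x : Rn n, (∏ i, x i ^ β i) * a x = 0

/-! ### Auxiliary lemmas -/

section AuxWCMF

open Filter

variable {n : ℕ}

lemma isClosed_cube (z : Rn n) (r : ℝ) : IsClosed (cube z r) := by
  have h : cube z r = ⋂ i, (fun x : Rn n => |x i - z i|) ⁻¹' Set.Iic (r / 2) := by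
    ext x; simp [cube, Set.mem_iInter]
  rw [h]
  refine isClosed_iInter fun i => IsClosed.preimage ?_ isClosed_Iic
  fun_prop

lemma measurableSet_cube (z : Rn n) (r : ℝ) : MeasurableSet (cube z r) :=
  (isClosed_cube z r).measurableSet

lemma volume_cube_lt_top (z : Rn n) (r : ℝ) : volume (cube z r) < ⊤ := by
  have hb : Bornology.IsBounded (cube z r) := by
    rw [Metric.isBounded_iff_subset_closedBall z]
    refine ⟨Real.sqrt (n * (r / 2) ^ 2), fun x hx => ?_⟩
    rw [Metric.mem_closedBall, dist_eq_norm, EuclideanSpace.norm_eq]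
    refine Real.sqrt_le_sqrt ?_
    have hsub : ∀ i, ‖(x - z) i‖ ^ 2 ≤ (r / 2) ^ 2 := by
      intro i
      have h1 : (x - z) i = x i - z i := rfl
      rw [h1, Real.norm_eq_abs]
      exact pow_le_pow_left₀ (abs_nonneg _) (hx i) 2
    calc (∑ i, ‖(x - z) i‖ ^ 2) ≤ ∑ _i : Fin n, (r / 2) ^ 2 :=
          Finset.sum_le_sum fun i _ => hsub i
      _ = n * (r / 2) ^ 2 := by simp [Finset.sum_const, mul_comm]
  exact hb.measure_lt_top

lemma one_lt_conjExp {t : ℝ} (ht : 1 < t) : 1 < conjExp t := by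
  unfold conjExp; rw [lt_div_iff₀ (by linarith)]; linarith

lemma conjExp_le_conjExp {a t : ℝ} (ha : 1 < a) (hat : a ≤ t) : conjExp t ≤ conjExp a := by
  unfold conjExp
  rw [div_le_div_iff₀ (by linarith) (by linarith)]
  nlinarith

lemma conjExp_le_two {t : ℝ} (ht : 2 ≤ t) : conjExp t ≤ 2 := by
  unfold conjExp; rw [div_le_iff₀ (by linarith)]; linarith

lemma conjExp_transport {qx s₀ d : ℝ} (hq : 0 < qx) (hs : 1 / qx < s₀) (hd : 0 < d) :
    conjExp ((s₀ + d) * (1 / qx + d)⁻¹) = ((s₀ + d) / s₀) * conjExp (s₀ * qx) := by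
  have hq1 : 0 < 1 / qx := by positivity
  have hs0 : 0 < s₀ := lt_trans hq1 hs
  have hA : 0 < 1 / qx + d := by positivity
  have h1 : 0 < s₀ - 1 / qx := by linarith
  have h2 : 0 < s₀ * qx - 1 := by
    have := (div_lt_iff₀ hq).mp hs
    linarith
  have hT : (s₀ + d) * (1 / qx + d)⁻¹ - 1 = (s₀ - 1 / qx) * (1 / qx + d)⁻¹ := by
    field_simp
    ring
  have hAne : (1 / qx + d)⁻¹ ≠ 0 := by positivity
  unfold conjExp
  rw [hT, mul_div_mul_right _ _ hAne, div_mul_div_comm,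
    div_eq_div_iff h1.ne' (by positivity)]
  field_simp

lemma luxNorm_le {ρ : Rn n → ℝ} {F : Rn n → ℝ≥0∞} {lam : ℝ≥0∞}
    (h : ∫⁻ x, (F x / lam) ^ ρ x ≤ 1) : luxNorm ρ F ≤ lam :=
  sInf_le h

lemma luxNorm_congr_ae {ρ₁ ρ₂ : Rn n → ℝ} {F₁ F₂ : Rn n → ℝ≥0∞}
    (hρ : ρ₁ =ᵐ[(volume : Measure (Rn n))] ρ₂)
    (hF : F₁ =ᵐ[(volume : Measure (Rn n))] F₂) :
    luxNorm ρ₁ F₁ = luxNorm ρ₂ F₂ := by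
  unfold luxNorm
  congr 1
  ext lam
  have hint : ∫⁻ x, (F₁ x / lam) ^ ρ₁ x = ∫⁻ x, (F₂ x / lam) ^ ρ₂ x := by
    refine lintegral_congr_ae ?_
    filter_upwards [hρ, hF] with x h1 h2
    rw [h1, h2]
  simp only [Set.mem_setOf_eq, hint]

lemma luxNorm_mono_ae {ρ : Rn n → ℝ}
    (hρ : ∀ᵐ x ∂(volume : Measure (Rn n)), 0 ≤ ρ x)
    {F G : Rn n → ℝ≥0∞} (hFG : ∀ᵐ x ∂(volume : Measure (Rn n)), F x ≤ G x) :
    luxNorm ρ F ≤ luxNorm ρ G := by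
  refine sInf_le_sInf fun lam hlam => ?_
  refine le_trans (lintegral_mono_ae ?_) hlam
  filter_upwards [hρ, hFG] with x h0 h1
  exact ENNReal.rpow_le_rpow (ENNReal.div_le_div_right h1 lam) h0

lemma luxNorm_rpow {ρ : Rn n → ℝ} {c : ℝ} (hc : 0 < c) (F : Rn n → ℝ≥0∞) :
    luxNorm (fun x => c * ρ x) F = (luxNorm ρ fun x => F x ^ c) ^ (1 / c) := by
  have hcol1 : ∀ y : ℝ≥0∞, (y ^ (1 / c)) ^ c = y := fun y => by
    rw [← ENNReal.rpow_mul, one_div, inv_mul_cancel₀ hc.ne', ENNReal.rpow_one]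
  have hcol2 : ∀ y : ℝ≥0∞, (y ^ c) ^ (1 / c) = y := fun y => by
    rw [← ENNReal.rpow_mul, one_div, mul_inv_cancel₀ hc.ne', ENNReal.rpow_one]
  have hmem : ∀ lam : ℝ≥0∞, (∫⁻ x, (F x / lam) ^ (c * ρ x)) = ∫⁻ x, (F x ^ c / lam ^ c) ^ ρ x := by
    intro lam
    refine lintegral_congr fun x => ?_
    rw [ENNReal.rpow_mul, ENNReal.div_rpow_of_nonneg _ _ hc.le]
  have hset : {lam : ℝ≥0∞ | ∫⁻ x, (F x / lam) ^ (c * ρ x) ≤ 1}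
      = (fun y : ℝ≥0∞ => y ^ (1 / c)) '' {lam : ℝ≥0∞ | ∫⁻ x, (F x ^ c / lam) ^ ρ x ≤ 1} := by
    ext lam
    constructor
    · intro hl
      refine ⟨lam ^ c, ?_, hcol2 lam⟩
      simpa [Set.mem_setOf_eq, hmem lam] using hl
    · rintro ⟨ν, hν, rfl⟩
      simp only [Set.mem_setOf_eq, hmem, hcol1]
      exact hν
  have hmap : ∀ S : Set ℝ≥0∞, sInf ((fun y : ℝ≥0∞ => y ^ (1 / c)) '' S) = sInf S ^ (1 / c) := by
    intro S
    have hco : (fun y : ℝ≥0∞ => y ^ (1 / c)) = ⇑(ENNReal.orderIsoRpow (1 / c) (by positivity)) := by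
      funext y
      rw [ENNReal.orderIsoRpow_apply]
    rw [hco, sInf_image, ← OrderIso.map_sInf, ENNReal.orderIsoRpow_apply]
  unfold luxNorm
  rw [hset, hmap]

lemma luxNorm_rpow' {ρ : Rn n → ℝ} {c : ℝ} (hc : 0 < c) (F : Rn n → ℝ≥0∞) :
    luxNorm ρ (fun x => F x ^ c) = (luxNorm (fun x => c * ρ x) F) ^ c := by
  rw [luxNorm_rpow hc F, ← ENNReal.rpow_mul, one_div, inv_mul_cancel₀ hc.ne', ENNReal.rpow_one]

lemma exists_modular_le {ρ : Rn n → ℝ}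
    (hρ : ∀ᵐ x ∂(volume : Measure (Rn n)), 0 ≤ ρ x)
    {F : Rn n → ℝ≥0∞} (h : luxNorm ρ F < ⊤) :
    ∃ lam : ℝ≥0∞, 1 ≤ lam ∧ lam ≠ ⊤ ∧ ∫⁻ x, (F x / lam) ^ ρ x ≤ 1 := by
  obtain ⟨lam, hmem, hlt⟩ := sInf_lt_iff.mp h
  refine ⟨max lam 1, le_max_right _ _, ?_, ?_⟩
  · simp [hlt.ne]
  · refine le_trans (lintegral_mono_ae ?_) hmem
    filter_upwards [hρ] with x h0
    exact ENNReal.rpow_le_rpow (ENNReal.div_le_div_left (le_max_left _ _) _) h0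

lemma fracMax_rpow_le {f : Rn n → ℝ} (hf : Measurable f) {c : ℝ} (hc : 1 < c) (x : Rn n) :
    fracMax 0 f x ^ c ≤ fracMax 0 (fun y => |f y| ^ c) x := by
  have hc0 : 0 < c := lt_trans one_pos hc
  have hcol2 : ∀ y : ℝ≥0∞, (y ^ (1 / c)) ^ c = y := fun y => by
    rw [← ENNReal.rpow_mul, one_div, inv_mul_cancel₀ hc0.ne', ENNReal.rpow_one]
  set g : Rn n → ℝ := fun y => |f y| ^ c with hgdef
  have habs : ∀ y, ENNReal.ofReal |g y| = ENNReal.ofReal |f y| ^ c := by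
    intro y
    rw [hgdef]
    simp only
    rw [abs_of_nonneg (Real.rpow_nonneg (abs_nonneg _) c),
      ENNReal.ofReal_rpow_of_nonneg (abs_nonneg _) hc0.le]
  have key : ∀ (z : Rn n) (r : ℝ), 0 < r → x ∈ cube z r →
      ((volume (cube z r)) ^ ((0 : ℝ) / n - 1) * ∫⁻ y in cube z r, ENNReal.ofReal |f y|) ^ c
        ≤ (volume (cube z r)) ^ ((0 : ℝ) / n - 1) * ∫⁻ y in cube z r, ENNReal.ofReal |g y| := by
    intro z r hr hx
    set V := volume (cube z r) with hV
    have hexp : (0 : ℝ) / n - 1 = -1 := by rw [zero_div, zero_sub]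
    rw [hexp]
    set I := ∫⁻ y in cube z r, ENNReal.ofReal |f y| with hI
    set J := ∫⁻ y in cube z r, ENNReal.ofReal |g y| with hJ
    rcases eq_or_ne V 0 with hV0 | hV0
    · have hI0 : I = 0 := by
        rw [hI]
        have : (volume : Measure (Rn n)).restrict (cube z r) = 0 :=
          Measure.restrict_eq_zero.mpr hV0
        rw [this, lintegral_zero_measure]
      rw [hI0, mul_zero, ENNReal.zero_rpow_of_pos hc0]
      exact zero_le
    rcases eq_or_ne V ⊤ with hVt | hVt
    · rw [hVt, ENNReal.top_rpow_of_neg (by norm_num), zero_mul,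
        ENNReal.zero_rpow_of_pos hc0]
      exact zero_le
    -- main case
    have hconj : c.HolderConjugate (Real.conjExponent c) := Real.HolderConjugate.conjExponent hc
    have hholder := ENNReal.lintegral_mul_le_Lp_mul_Lq ((volume : Measure (Rn n)).restrict (cube z r))
      hconj (hf.abs.ennreal_ofReal.aemeasurable) aemeasurable_const (g := fun _ => (1 : ℝ≥0∞))
    simp only [mul_one, ENNReal.one_rpow, Pi.mul_apply] at hholder
    rw [setLIntegral_one] at hholder
    -- hholder : I ≤ (∫⁻ (ofReal |f|)^c)^(1/c) * V^(1/conj)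
    have hJeq : (∫⁻ y in cube z r, ENNReal.ofReal |f y| ^ c) = J := by
      rw [hJ]
      exact lintegral_congr fun y => (habs y).symm
    rw [hJeq] at hholder
    have hIc : I ^ c ≤ J * V ^ (c / Real.conjExponent c) := by
      calc I ^ c ≤ (J ^ (1 / c) * V ^ (1 / Real.conjExponent c)) ^ c :=
            ENNReal.rpow_le_rpow hholder hc0.le
        _ = J * V ^ (c / Real.conjExponent c) := by
            rw [ENNReal.mul_rpow_of_nonneg _ _ hc0.le, hcol2, ← ENNReal.rpow_mul,
              one_div, inv_mul_eq_div]
    have hconjc : c / Real.conjExponent c = c - 1 := hconj.div_conj_eq_sub_one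
    rw [hconjc] at hIc
    calc (V ^ (-1 : ℝ) * I) ^ c = V ^ (-1 * c) * I ^ c := by
          rw [ENNReal.mul_rpow_of_nonneg _ _ hc0.le, ENNReal.rpow_mul]
      _ ≤ V ^ (-1 * c) * (J * V ^ (c - 1)) := mul_le_mul_right hIc _
      _ = (V ^ (-1 * c) * V ^ (c - 1)) * J := by ring
      _ = V ^ (-1 : ℝ) * J := by
          rw [← ENNReal.rpow_add _ _ hV0 hVt]
          congr 1
          · congr 1
            ring
  have hstep : fracMax 0 f x ≤ fracMax 0 g x ^ (1 / c) := by
    refine iSup_le fun z => iSup_le fun r => iSup_le fun hr => iSup_le fun hx => ?_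
    rw [← ENNReal.rpow_le_rpow_iff hc0, hcol2]
    refine le_trans (key z r hr hx) ?_
    exact le_iSup_of_le z (le_iSup_of_le r (le_iSup_of_le hr (le_iSup_of_le hx le_rfl)))
  calc fracMax 0 f x ^ c ≤ (fracMax 0 g x ^ (1 / c)) ^ c := ENNReal.rpow_le_rpow hstep hc0.le
    _ = fracMax 0 g x := hcol2 _

lemma wnorm_congr_ae {ρ₁ ρ₂ ν₁ ν₂ : Rn n → ℝ}
    (hρ : ρ₁ =ᵐ[(volume : Measure (Rn n))] ρ₂)
    (hν : ν₁ =ᵐ[(volume : Measure (Rn n))] ν₂) (f : Rn n → ℝ≥0∞) :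
    wnorm ρ₁ ν₁ f = wnorm ρ₂ ν₂ f :=
  luxNorm_congr_ae hρ (hν.mono fun x hx => by dsimp only; rw [hx])

lemma maxBounded_congr {ρ₁ ρ₂ ν₁ ν₂ : Rn n → ℝ}
    (hρ : ρ₁ =ᵐ[(volume : Measure (Rn n))] ρ₂)
    (hν : ν₁ =ᵐ[(volume : Measure (Rn n))] ν₂)
    (h : MaxBounded ρ₁ ν₁) : MaxBounded ρ₂ ν₂ := by
  obtain ⟨C, hC, hb⟩ := h
  refine ⟨C, hC, fun f hf => ?_⟩
  have h1 : wnorm ρ₂ ν₂ (fracMax 0 f) = wnorm ρ₁ ν₁ (fracMax 0 f) :=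
    wnorm_congr_ae hρ.symm hν.symm _
  have h2 : wnormR ρ₂ ν₂ f = wnormR ρ₁ ν₁ f :=
    wnorm_congr_ae hρ.symm hν.symm _
  rw [h1, h2]
  exact hb f hf

lemma maxBounded_rpow {ρ ν : Rn n → ℝ} {c : ℝ} (hc : 1 < c)
    (hρ : ∀ᵐ x ∂(volume : Measure (Rn n)), 0 ≤ ρ x)
    (hν : ∀ᵐ x ∂(volume : Measure (Rn n)), 0 ≤ ν x)
    (h : MaxBounded ρ ν) :
    MaxBounded (fun x => c * ρ x) (fun x => ν x ^ (1 / c)) := by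
  obtain ⟨C, hC, hb⟩ := h
  have hc0 : 0 < c := lt_trans one_pos hc
  refine ⟨C ^ (1 / c), Real.rpow_pos_of_pos hC _, fun f hf => ?_⟩
  set g : Rn n → ℝ := fun y => |f y| ^ c with hgdef
  have hgm : Measurable g := (hf.abs).pow measurable_const
  have hWae : ∀ᵐ x ∂(volume : Measure (Rn n)),
      ENNReal.ofReal (ν x ^ (1 / c)) ^ c = ENNReal.ofReal (ν x) := by
    filter_upwards [hν] with x hx
    have h1 : (ν x ^ (1 / c)) ^ c = ν x := by
      rw [← Real.rpow_mul hx, one_div, inv_mul_cancel₀ hc0.ne', Real.rpow_one]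
    rw [ENNReal.ofReal_rpow_of_nonneg (Real.rpow_nonneg hx (1 / c)) hc0.le, h1]
  have habs : ∀ y, ENNReal.ofReal |g y| = ENNReal.ofReal |f y| ^ c := by
    intro y
    rw [hgdef]
    simp only
    rw [abs_of_nonneg (Real.rpow_nonneg (abs_nonneg _) c),
      ENNReal.ofReal_rpow_of_nonneg (abs_nonneg _) hc0.le]
  -- right hand side identification
  have hRHS : wnormR ρ ν g = (wnormR (fun x => c * ρ x) (fun x => ν x ^ (1 / c)) f) ^ c := by
    unfold wnormR wnorm
    rw [← luxNorm_rpow' hc0]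
    refine luxNorm_congr_ae (EventuallyEq.refl _ _) ?_
    filter_upwards [hWae] with x hx
    rw [ENNReal.mul_rpow_of_nonneg _ _ hc0.le, hx, habs]
  -- left hand side
  have hLHS : wnorm (fun x => c * ρ x) (fun x => ν x ^ (1 / c)) (fracMax 0 f)
      ≤ (wnorm ρ ν (fracMax 0 g)) ^ (1 / c) := by
    unfold wnorm
    rw [luxNorm_rpow hc0]
    refine ENNReal.rpow_le_rpow ?_ (by positivity)
    have e1 : (fun x => (fracMax 0 f x * ENNReal.ofReal (ν x ^ (1 / c))) ^ c)
        =ᵐ[(volume : Measure (Rn n))] fun x => fracMax 0 f x ^ c * ENNReal.ofReal (ν x) := by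
      filter_upwards [hWae] with x hx
      rw [ENNReal.mul_rpow_of_nonneg _ _ hc0.le, hx]
    refine le_trans (le_of_eq (luxNorm_congr_ae (EventuallyEq.refl _ _) e1))
      (luxNorm_mono_ae hρ ?_)
    refine Filter.Eventually.of_forall fun x => ?_
    exact mul_le_mul_left (fracMax_rpow_le hf hc x) _
  calc wnorm (fun x => c * ρ x) (fun x => ν x ^ (1 / c)) (fracMax 0 f)
      ≤ (wnorm ρ ν (fracMax 0 g)) ^ (1 / c) := hLHS
    _ ≤ (ENNReal.ofReal C * wnormR ρ ν g) ^ (1 / c) :=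
        ENNReal.rpow_le_rpow (hb g hgm) (by positivity)
    _ = ENNReal.ofReal (C ^ (1 / c)) * wnormR (fun x => c * ρ x) (fun x => ν x ^ (1 / c)) f := by
        rw [hRHS, ENNReal.mul_rpow_of_nonneg _ _ (by positivity : (0:ℝ) ≤ 1 / c),
          ← ENNReal.rpow_mul, mul_one_div, div_self hc0.ne', ENNReal.rpow_one,
          ENNReal.ofReal_rpow_of_pos hC]

lemma lintegral_rpow_lt_top_of_wnormR_lt_top {ρ w : Rn n → ℝ} {Q : Set (Rn n)}
    (hQ : MeasurableSet Q) {Rb : ℝ} (hRb : 0 ≤ Rb)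
    (hbounds : ∀ᵐ x ∂(volume : Measure (Rn n)), 0 ≤ ρ x ∧ ρ x ≤ Rb)
    (h : wnormR ρ w (Q.indicator 1) < ⊤) :
    ∫⁻ x in Q, ENNReal.ofReal (w x) ^ ρ x < ⊤ := by
  obtain ⟨lam, hlam1, hlamt, hmod⟩ :=
    exists_modular_le (hbounds.mono fun x hx => hx.1) h
  have hlam0 : lam ≠ 0 := fun h0 => by simp [h0] at hlam1
  set K : ℝ≥0∞ := (lam ^ Rb)⁻¹ with hK
  have hpow_ne_top : lam ^ Rb ≠ ⊤ := ENNReal.rpow_ne_top_of_nonneg hRb hlamt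
  have hpow_pos : 0 < lam ^ Rb := ENNReal.rpow_pos (lt_of_lt_of_le zero_lt_one hlam1) hlamt
  have hKne0 : K ≠ 0 := by
    rw [hK]
    exact ENNReal.inv_ne_zero.mpr hpow_ne_top
  have hKt : K ≠ ⊤ := by
    rw [hK]
    exact ENNReal.inv_ne_top.mpr hpow_pos.ne'
  have key : ∫⁻ x, Q.indicator (fun x => K * ENNReal.ofReal (w x) ^ ρ x) x ≤ 1 := by
    refine le_trans (lintegral_mono_ae ?_) hmod
    filter_upwards [hbounds] with x hx
    obtain ⟨h0, hRx⟩ := hx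
    by_cases hxQ : x ∈ Q
    · rw [Set.indicator_of_mem hxQ]
      have hone : ENNReal.ofReal |Q.indicator (1 : Rn n → ℝ) x| = 1 := by
        rw [Set.indicator_of_mem hxQ]
        norm_num
      show K * ENNReal.ofReal (w x) ^ ρ x
          ≤ (ENNReal.ofReal |Q.indicator (1 : Rn n → ℝ) x| * ENNReal.ofReal (w x) / lam) ^ ρ x
      rw [hone, one_mul, ENNReal.div_rpow_of_nonneg _ _ h0, div_eq_mul_inv, mul_comm]
      refine mul_le_mul_right ?_ _
      rw [hK]
      exact ENNReal.inv_le_inv.mpr (ENNReal.rpow_le_rpow_of_exponent_le hlam1 hRx)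
    · rw [Set.indicator_of_notMem hxQ]
      exact zero_le
  rw [lintegral_indicator hQ, lintegral_const_mul' _ _ hKt] at key
  by_contra hcon
  rw [not_lt, top_le_iff] at hcon
  rw [hcon, ENNReal.mul_top hKne0] at key
  exact absurd key (by simp)

lemma wnormR_ind_lt_top_of_bound {ρ w : Rn n → ℝ} {Q : Set (Rn n)} (hQ : MeasurableSet Q)
    {B : Rn n → ℝ≥0∞} (hB : (∫⁻ x in Q, B x) < ⊤)
    (hae : ∀ᵐ x ∂(volume : Measure (Rn n)),
      1 ≤ ρ x ∧ (x ∈ Q → ENNReal.ofReal (w x) ^ ρ x ≤ B x)) :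
    wnormR ρ w (Q.indicator 1) < ⊤ := by
  set lam : ℝ≥0∞ := (∫⁻ x in Q, B x) + 1 with hlam
  have hlamt : lam ≠ ⊤ := by
    rw [hlam]
    exact (ENNReal.add_lt_top.mpr ⟨hB, ENNReal.one_lt_top⟩).ne
  have hlam1 : 1 ≤ lam := by
    rw [hlam]
    exact le_add_self
  have hlam0 : lam ≠ 0 := fun h0 => by simp [h0] at hlam1
  refine lt_of_le_of_lt (luxNorm_le (lam := lam) ?_) (lt_top_iff_ne_top.mpr hlamt)
  have hptwise : ∀ᵐ x ∂(volume : Measure (Rn n)),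
      (ENNReal.ofReal |Q.indicator (1 : Rn n → ℝ) x| * ENNReal.ofReal (w x) / lam) ^ ρ x
        ≤ Q.indicator (fun x => lam⁻¹ * B x) x := by
    filter_upwards [hae] with x hx
    obtain ⟨h1, hQx⟩ := hx
    by_cases hxQ : x ∈ Q
    · rw [Set.indicator_of_mem hxQ (fun x => lam⁻¹ * B x)]
      have hone : ENNReal.ofReal |Q.indicator (1 : Rn n → ℝ) x| = 1 := by
        rw [Set.indicator_of_mem hxQ]
        norm_num
      rw [hone, one_mul, ENNReal.div_rpow_of_nonneg _ _ (le_trans zero_le_one h1)]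
      calc ENNReal.ofReal (w x) ^ ρ x / lam ^ ρ x ≤ B x / lam ^ ρ x :=
            ENNReal.div_le_div_right (hQx hxQ) _
        _ ≤ B x / lam := by
            refine ENNReal.div_le_div_left ?_ _
            calc lam = lam ^ (1 : ℝ) := (ENNReal.rpow_one lam).symm
              _ ≤ lam ^ ρ x := ENNReal.rpow_le_rpow_of_exponent_le hlam1 h1
        _ = lam⁻¹ * B x := by rw [div_eq_mul_inv, mul_comm]
    · rw [Set.indicator_of_notMem hxQ, Set.indicator_of_notMem hxQ]
      norm_num
      linarith
  refine le_trans (lintegral_mono_ae hptwise) ?_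
  rw [lintegral_indicator hQ, lintegral_const_mul' _ _ (ENNReal.inv_ne_top.mpr hlam0)]
  calc lam⁻¹ * ∫⁻ x in Q, B x ≤ lam⁻¹ * lam :=
        mul_le_mul_right (by rw [hlam]; exact le_self_add) _
    _ = 1 := ENNReal.inv_mul_cancel hlam0 hlamt

end AuxWCMF

set_option maxHeartbeats 1000000 in
/-- If `0 < α < n`, `0 < q₋ ≤ q₊ < ∞`, `ω ∈ 𝒲_{q(·)}` and
`1/p(·) = 1/q(·) + α/n`, then `ω ∈ 𝒲_{p(·)}` and
`s_{ω,p(·)} ≤ s_{ω,q(·)} + α/n`. -/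
theorem weight_class_mono_fractional
    (n : ℕ) (hn : 0 < n) (α : ℝ) (hα : 0 < α) (hαn : α < n)
    (q : Rn n → ℝ) (hqmeas : Measurable q)
    (hqminus : 0 < eInf q) (hqplus : eSup q < ⊤)
    (ω : Rn n → ℝ) (hω : WClass q ω)
    (p : Rn n → ℝ) (hp : ∀ x, 1 / p x = 1 / q x + α / (n : ℝ)) :
    WClass p ω ∧ sIndex p ω ≤ sIndex q ω + α / (n : ℝ) := by
  classical
  have hn' : (0 : ℝ) < n := Nat.cast_pos.mpr hn
  set d : ℝ := α / (n : ℝ) with hd_def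
  have hd : 0 < d := div_pos hα hn'
  have hpf : ∀ x, p x = (1 / q x + d)⁻¹ := by
    intro x
    rw [hd_def, ← hp x, one_div, inv_inv]
  obtain ⟨hωW, hcl2, hcl3⟩ := hω
  obtain ⟨hωloc, hωpos⟩ := hωW
  have hvol0 : (volume : Measure (Rn n)) ≠ 0 := by
    intro h0
    have h1 := isOpen_univ.measure_pos (volume : Measure (Rn n)) Set.univ_nonempty
    rw [h0] at h1
    simp at h1
  have hNeBot : (ae (volume : Measure (Rn n))).NeBot := ae_neBot.mpr hvol0
  have hq_lb : ∀ᵐ x ∂(volume : Measure (Rn n)), eInf q ≤ ENNReal.ofReal (q x) :=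
    ae_essInf_le
  have hEqt : eInf q ≠ ⊤ := by
    obtain ⟨x, hx⟩ := hq_lb.exists
    exact (lt_of_le_of_lt hx ENNReal.ofReal_lt_top).ne
  set m₁ : ℝ := (eInf q).toReal with hm₁def
  have hm₁pos : 0 < m₁ := ENNReal.toReal_pos hqminus.ne' hEqt
  have hm₁eq : ENNReal.ofReal m₁ = eInf q := ENNReal.ofReal_toReal hEqt
  have hm₁le : ∀ᵐ x ∂(volume : Measure (Rn n)), m₁ ≤ q x := by
    filter_upwards [hq_lb] with x hx
    by_contra hcon
    push_neg at hcon
    have h2 : ENNReal.ofReal (q x) < ENNReal.ofReal m₁ :=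
      (ENNReal.ofReal_lt_ofReal_iff hm₁pos).mpr hcon
    rw [hm₁eq] at h2
    exact absurd hx (not_le.mpr h2)
  set Mq : ℝ := (eSup q).toReal with hMqdef
  have hMqeq : ENNReal.ofReal Mq = eSup q := ENNReal.ofReal_toReal hqplus.ne
  have hMqle : ∀ᵐ x ∂(volume : Measure (Rn n)), q x ≤ Mq := by
    have hub : ∀ᵐ x ∂(volume : Measure (Rn n)), ENNReal.ofReal (q x) ≤ eSup q :=
      ae_le_essSup
    filter_upwards [hub, hm₁le] with x hx h1
    by_contra hcon
    push_neg at hcon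
    have h0 : 0 < q x := lt_of_lt_of_le hm₁pos h1
    have h2 : ENNReal.ofReal Mq < ENNReal.ofReal (q x) :=
      (ENNReal.ofReal_lt_ofReal_iff h0).mpr hcon
    rw [hMqeq] at h2
    exact absurd hx (not_le.mpr h2)
  set pm : ℝ := (1 / m₁ + d)⁻¹ with hpmdef
  have hpm : 0 < pm := by rw [hpmdef]; positivity
  have hpfacts : ∀ᵐ x ∂(volume : Measure (Rn n)),
      0 < q x ∧ 0 < p x ∧ pm ≤ p x ∧ p x ≤ q x := by
    filter_upwards [hm₁le] with x hx1
    have hq0 : 0 < q x := lt_of_lt_of_le hm₁pos hx1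
    have hqd : 0 < 1 / q x + d := by positivity
    have hpx : p x = (1 / q x + d)⁻¹ := hpf x
    have hp0 : 0 < p x := by rw [hpx]; positivity
    have hple : pm ≤ p x := by
      rw [hpx, hpmdef, ← one_div, ← one_div]
      refine one_div_le_one_div_of_le hqd ?_
      have h2 : 1 / q x ≤ 1 / m₁ := one_div_le_one_div_of_le hm₁pos hx1
      linarith
    have hpleq : p x ≤ q x := by
      rw [hpx]
      have h3 : (1 / q x + d)⁻¹ ≤ (1 / q x)⁻¹ := by
        rw [← one_div, ← one_div ((1 : ℝ) / q x)]
        exact one_div_le_one_div_of_le (by positivity) (by linarith)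
      calc (1 / q x + d)⁻¹ ≤ (1 / q x)⁻¹ := h3
        _ = q x := by rw [one_div, inv_inv]
    exact ⟨hq0, hp0, hple, hpleq⟩
  have hEp : ENNReal.ofReal pm ≤ eInf p := by
    refine le_essInf_of_ae_le _ ?_
    filter_upwards [hpfacts] with x hx
    exact ENNReal.ofReal_le_ofReal hx.2.2.1
  -- constraint transfer
  have hkey : ∀ s₀ : ℝ, max 1 (eInf q)⁻¹ < ENNReal.ofReal s₀ →
      (1 < s₀) ∧ (∀ᵐ x ∂(volume : Measure (Rn n)), 1 / q x < s₀)
        ∧ max 1 (eInf p)⁻¹ < ENNReal.ofReal (s₀ + d) := by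
    intro s₀ hs₀
    rw [max_lt_iff] at hs₀
    obtain ⟨hs₀1, hs₀inv⟩ := hs₀
    have hs₀1' : 1 < s₀ := by
      by_contra hcon
      push_neg at hcon
      exact absurd hs₀1 (not_lt.mpr (ENNReal.ofReal_le_one.mpr hcon))
    have hs₀pos : 0 < s₀ := lt_trans one_pos hs₀1'
    have hIlt : 1 / m₁ < s₀ := by
      have h1 : ((eInf q)⁻¹).toReal < s₀ := by
        have hne : (eInf q)⁻¹ ≠ ⊤ := (lt_of_lt_of_le hs₀inv le_top).ne
        have h2 := (ENNReal.toReal_lt_toReal hne ENNReal.ofReal_ne_top).mpr hs₀inv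
        rwa [ENNReal.toReal_ofReal hs₀pos.le] at h2
      rwa [ENNReal.toReal_inv, ← hm₁def, ← one_div] at h1
    have haeq : ∀ᵐ x ∂(volume : Measure (Rn n)), 1 / q x < s₀ := by
      filter_upwards [hm₁le] with x hx
      have h2 : 1 / q x ≤ 1 / m₁ := one_div_le_one_div_of_le hm₁pos hx
      linarith
    refine ⟨hs₀1', haeq, ?_⟩
    rw [max_lt_iff]
    constructor
    · rw [← ENNReal.ofReal_one]
      exact (ENNReal.ofReal_lt_ofReal_iff (by linarith)).mpr (by linarith)
    · have h4 : (eInf p)⁻¹ ≤ (ENNReal.ofReal pm)⁻¹ := ENNReal.inv_le_inv.mpr hEp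
      have h5 : (ENNReal.ofReal pm)⁻¹ = ENNReal.ofReal (1 / m₁ + d) := by
        rw [← ENNReal.ofReal_inv_of_pos hpm, hpmdef, inv_inv]
      refine lt_of_le_of_lt h4 ?_
      rw [h5]
      exact (ENNReal.ofReal_lt_ofReal_iff (by linarith)).mpr (by linarith)
  -- transport of the conjugate exponent identity
  have htrans : ∀ s₀ : ℝ, (∀ᵐ x ∂(volume : Measure (Rn n)), 1 / q x < s₀) →
      (fun x => conjExp ((s₀ + d) * p x)) =ᵐ[(volume : Measure (Rn n))]
        fun x => ((s₀ + d) / s₀) * conjExp (s₀ * q x) := by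
    intro s₀ hae
    filter_upwards [hae, hpfacts] with x h1 h2
    rw [hpf x]
    exact conjExp_transport h2.1 h1 hd
  -- Clause 2
  obtain ⟨ps₀, hps₀pos, hps₀lt, hcube⟩ := hcl2
  rw [lt_min_iff] at hps₀lt
  obtain ⟨hps₀1, hps₀q⟩ := hps₀lt
  have hps₀1' : ps₀ < 1 := ENNReal.ofReal_lt_one.mp hps₀1
  have hps₀m₁ : ps₀ < m₁ := by
    rw [← hm₁eq] at hps₀q
    exact (ENNReal.ofReal_lt_ofReal_iff hm₁pos).mp hps₀q
  set ps : ℝ := min (pm / 2) (ps₀ / 2) with hpsdef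
  have hpspos : 0 < ps := lt_min (by positivity) (by positivity)
  have hps2pm : 2 * ps ≤ pm := by
    have h1 := min_le_left (pm / 2) (ps₀ / 2)
    rw [← hpsdef] at h1
    linarith
  have hps2ps₀ : 2 * ps ≤ ps₀ := by
    have h1 := min_le_right (pm / 2) (ps₀ / 2)
    rw [← hpsdef] at h1
    linarith
  have hclause2 : ∃ ps : ℝ, 0 < ps ∧ ENNReal.ofReal ps < min 1 (eInf p) ∧
      ∀ (z : Rn n) (r : ℝ), 0 < r →
        wnormR (fun x => p x / ps) (fun x => ω x ^ ps) ((cube z r).indicator 1) < ⊤ ∧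
        wnormR (fun x => conjExp (p x / ps)) (fun x => ω x ^ (-ps))
          ((cube z r).indicator 1) < ⊤ := by
    refine ⟨ps, hpspos, ?_, ?_⟩
    · rw [lt_min_iff]
      constructor
      · exact ENNReal.ofReal_lt_one.mpr (by linarith)
      · refine lt_of_lt_of_le ?_ hEp
        exact (ENNReal.ofReal_lt_ofReal_iff hpm).mpr (by linarith)
    · intro z r hr
      obtain ⟨hfin1, hfin2⟩ := hcube z r hr
      have hQ := measurableSet_cube z r
      have hI1 : ∫⁻ x in cube z r, ENNReal.ofReal (ω x ^ ps₀) ^ (q x / ps₀) < ⊤ := by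
        refine lintegral_rpow_lt_top_of_wnormR_lt_top hQ (Rb := Mq / ps₀)
          (by positivity) ?_ hfin1
        filter_upwards [hm₁le, hMqle] with x h1 h2
        constructor
        · exact div_nonneg (le_trans hm₁pos.le h1) hps₀pos.le
        · gcongr
      have h1m : 1 < m₁ / ps₀ := (one_lt_div hps₀pos).mpr hps₀m₁
      have hI2 : ∫⁻ x in cube z r,
          ENNReal.ofReal (ω x ^ (-ps₀)) ^ conjExp (q x / ps₀) < ⊤ := by
        refine lintegral_rpow_lt_top_of_wnormR_lt_top hQ (Rb := conjExp (m₁ / ps₀))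
          (le_trans zero_le_one (one_lt_conjExp h1m).le) ?_ hfin2
        filter_upwards [hm₁le] with x h1
        have hle : m₁ / ps₀ ≤ q x / ps₀ := by gcongr
        exact ⟨le_trans zero_le_one (one_lt_conjExp (lt_of_lt_of_le h1m hle)).le,
          conjExp_le_conjExp h1m hle⟩
      constructor
      · refine wnormR_ind_lt_top_of_bound hQ
          (B := fun x => 1 + ENNReal.ofReal (ω x ^ ps₀) ^ (q x / ps₀)) ?_ ?_
        · rw [lintegral_add_left measurable_const, setLIntegral_one]
          exact ENNReal.add_lt_top.mpr ⟨volume_cube_lt_top z r, hI1⟩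
        · filter_upwards [hpfacts, hωpos, hm₁le] with x hx hωx h1
          obtain ⟨hq0, hp0, hpmle, hpq⟩ := hx
          have hdivge : 1 ≤ p x / ps := by
            rw [le_div_iff₀ hpspos]
            linarith
          refine ⟨hdivge, fun _ => ?_⟩
          have hcol : ENNReal.ofReal (ω x ^ ps) ^ (p x / ps)
              = ENNReal.ofReal (ω x) ^ p x := by
            rw [← ENNReal.ofReal_rpow_of_pos hωx, ← ENNReal.rpow_mul,
              mul_comm ps (p x / ps), div_mul_cancel₀ _ hpspos.ne']
          have hcol2 : ENNReal.ofReal (ω x ^ ps₀) ^ (q x / ps₀)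
              = ENNReal.ofReal (ω x) ^ q x := by
            rw [← ENNReal.ofReal_rpow_of_pos hωx, ← ENNReal.rpow_mul,
              mul_comm ps₀ (q x / ps₀), div_mul_cancel₀ _ hps₀pos.ne']
          rw [hcol, hcol2]
          rcases le_total (ENNReal.ofReal (ω x)) 1 with hW | hW
          · exact le_trans (ENNReal.rpow_le_one hW hp0.le) le_self_add
          · exact le_trans (ENNReal.rpow_le_rpow_of_exponent_le hW hpq) le_add_self
      · refine wnormR_ind_lt_top_of_bound hQ
          (B := fun x => 1 + ENNReal.ofReal (ω x ^ (-ps₀)) ^ conjExp (q x / ps₀)) ?_ ?_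
        · rw [lintegral_add_left measurable_const, setLIntegral_one]
          exact ENNReal.add_lt_top.mpr ⟨volume_cube_lt_top z r, hI2⟩
        · filter_upwards [hpfacts, hωpos, hm₁le] with x hx hωx h1
          obtain ⟨hq0, hp0, hpmle, hpq⟩ := hx
          have hdiv2 : 2 ≤ p x / ps := by
            rw [le_div_iff₀ hpspos]
            linarith
          have hrp1 : 1 ≤ conjExp (p x / ps) := (one_lt_conjExp (by linarith)).le
          have hrp2 : conjExp (p x / ps) ≤ 2 := conjExp_le_two hdiv2
          refine ⟨hrp1, fun _ => ?_⟩
          have hqdiv : m₁ / ps₀ ≤ q x / ps₀ := by gcongr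
          have hrq1 : 1 ≤ conjExp (q x / ps₀) :=
            (one_lt_conjExp (lt_of_lt_of_le h1m hqdiv)).le
          have hcolL : ENNReal.ofReal (ω x ^ (-ps)) ^ conjExp (p x / ps)
              = ENNReal.ofReal (ω x) ^ (-ps * conjExp (p x / ps)) := by
            rw [← ENNReal.ofReal_rpow_of_pos hωx, ← ENNReal.rpow_mul]
          have hcolR : ENNReal.ofReal (ω x ^ (-ps₀)) ^ conjExp (q x / ps₀)
              = ENNReal.ofReal (ω x) ^ (-ps₀ * conjExp (q x / ps₀)) := by
            rw [← ENNReal.ofReal_rpow_of_pos hωx, ← ENNReal.rpow_mul]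
          rw [hcolL, hcolR]
          rcases le_total (ENNReal.ofReal (ω x)) 1 with hW | hW
          · refine le_trans (ENNReal.rpow_le_rpow_of_exponent_ge hW ?_) le_add_self
            have e1 : ps * conjExp (p x / ps) ≤ ps * 2 :=
              mul_le_mul_of_nonneg_left hrp2 hpspos.le
            have e2 : ps₀ * 1 ≤ ps₀ * conjExp (q x / ps₀) :=
              mul_le_mul_of_nonneg_left hrq1 hps₀pos.le
            nlinarith
          · refine le_trans ?_ le_self_add
            calc ENNReal.ofReal (ω x) ^ (-ps * conjExp (p x / ps))
                ≤ ENNReal.ofReal (ω x) ^ (0 : ℝ) := by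
                  refine ENNReal.rpow_le_rpow_of_exponent_le hW ?_
                  have e3 : 0 < ps * conjExp (p x / ps) :=
                    mul_pos hpspos (lt_of_lt_of_le one_pos hrp1)
                  linarith
              _ = 1 := ENNReal.rpow_zero
  -- Clause 3
  obtain ⟨κ₀, s₀, hκ₀, hs₀c, hMB⟩ := hcl3
  obtain ⟨hs₀1, hs₀ae, hs₀p⟩ := hkey s₀ hs₀c
  have hs₀pos : 0 < s₀ := lt_trans one_pos hs₀1
  have hκ₀pos : 0 < κ₀ := lt_trans one_pos hκ₀
  have hc1 : 1 < (s₀ + d) / s₀ := (one_lt_div hs₀pos).mpr (by linarith)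
  have hρ0 : ∀ᵐ x ∂(volume : Measure (Rn n)), 0 ≤ conjExp (s₀ * q x) := by
    filter_upwards [hs₀ae, hpfacts] with x h1 h2
    have h3 : 1 < s₀ * q x := by
      have := (div_lt_iff₀ h2.1).mp h1
      linarith
    exact le_trans zero_le_one (one_lt_conjExp h3).le
  have hclause3 : ∃ κ s : ℝ, 1 < κ ∧ max 1 (eInf p)⁻¹ < ENNReal.ofReal s ∧
      MaxBounded (fun x => conjExp (s * p x) / κ) (fun x => ω x ^ (-(κ / s))) := by
    refine ⟨κ₀ * ((s₀ + d) / s₀), s₀ + d, ?_, hs₀p, ?_⟩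
    · calc (1 : ℝ) = 1 * 1 := (one_mul 1).symm
        _ < κ₀ * ((s₀ + d) / s₀) := by
          exact mul_lt_mul'' hκ₀ hc1 zero_le_one zero_le_one
    · refine maxBounded_congr ?_ ?_ hMB
      · have hcne : (s₀ + d) / s₀ ≠ 0 := ne_of_gt (lt_trans one_pos hc1)
        filter_upwards [htrans s₀ hs₀ae] with x hx
        rw [hx, mul_comm κ₀ ((s₀ + d) / s₀)]
        exact (mul_div_mul_left _ _ hcne).symm
      · refine Filter.Eventually.of_forall fun x => ?_
        have hsd : (0 : ℝ) < s₀ + d := by linarith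
        have hexp : κ₀ * ((s₀ + d) / s₀) / (s₀ + d) = κ₀ / s₀ := by
          field_simp
        rw [hexp]
  -- s₀ is in the q index set
  have hSq_s₀ : MaxBounded (fun x => conjExp (s₀ * q x)) (fun x => ω x ^ (-(1 / s₀))) := by
    have hρ0' : ∀ᵐ x ∂(volume : Measure (Rn n)), 0 ≤ conjExp (s₀ * q x) / κ₀ := by
      filter_upwards [hρ0] with x hx
      positivity
    have hν0 : ∀ᵐ x ∂(volume : Measure (Rn n)), 0 ≤ ω x ^ (-(κ₀ / s₀)) := by
      filter_upwards [hωpos] with x hx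
      exact Real.rpow_nonneg hx.le _
    have h2 := maxBounded_rpow hκ₀ hρ0' hν0 hMB
    refine maxBounded_congr ?_ ?_ h2
    · refine Filter.Eventually.of_forall fun x => ?_
      field_simp
    · filter_upwards [hωpos] with x hx
      rw [← Real.rpow_mul hx.le]
      congr 1
      field_simp
      try ring
  -- transfer of membership in the index sets
  have htransfer : ∀ t : ℝ, (max 1 (eInf q)⁻¹ < ENNReal.ofReal t ∧
        MaxBounded (fun x => conjExp (t * q x)) fun x => ω x ^ (-(1 / t))) →
      (max 1 (eInf p)⁻¹ < ENNReal.ofReal (t + d) ∧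
        MaxBounded (fun x => conjExp ((t + d) * p x)) fun x => ω x ^ (-(1 / (t + d)))) := by
    rintro t ⟨htc, htMB⟩
    obtain ⟨ht1, htae, htp⟩ := hkey t htc
    have htpos : 0 < t := lt_trans one_pos ht1
    have hct : 1 < (t + d) / t := (one_lt_div htpos).mpr (by linarith)
    refine ⟨htp, ?_⟩
    have hρ0t : ∀ᵐ x ∂(volume : Measure (Rn n)), 0 ≤ conjExp (t * q x) := by
      filter_upwards [htae, hpfacts] with x h1 h2
      have h3 : 1 < t * q x := by
        have := (div_lt_iff₀ h2.1).mp h1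
        linarith
      exact le_trans zero_le_one (one_lt_conjExp h3).le
    have hν0t : ∀ᵐ x ∂(volume : Measure (Rn n)), 0 ≤ ω x ^ (-(1 / t)) := by
      filter_upwards [hωpos] with x hx
      exact Real.rpow_nonneg hx.le _
    have h2 := maxBounded_rpow hct hρ0t hν0t htMB
    refine maxBounded_congr ?_ ?_ h2
    · filter_upwards [htrans t htae] with x hx
      rw [hx]
    · filter_upwards [hωpos] with x hx
      rw [← Real.rpow_mul hx.le]
      congr 1
      have htdne : t + d ≠ 0 := ne_of_gt (by linarith : (0 : ℝ) < t + d)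
      field_simp
      try ring
  refine ⟨⟨⟨hωloc, hωpos⟩, hclause2, hclause3⟩, ?_⟩
  -- the index inequality
  have hSqne : {s : ℝ | max 1 (eInf q)⁻¹ < ENNReal.ofReal s ∧
      MaxBounded (fun x => conjExp (s * q x)) fun x => ω x ^ (-(1 / s))}.Nonempty :=
    ⟨s₀, hs₀c, hSq_s₀⟩
  have hSp_bdd : BddBelow {s : ℝ | max 1 (eInf p)⁻¹ < ENNReal.ofReal s ∧
      MaxBounded (fun x => conjExp (s * p x)) fun x => ω x ^ (-(1 / s))} := by
    refine ⟨1, fun t ht => ?_⟩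
    have h1 : 1 < ENNReal.ofReal t := lt_of_le_of_lt (le_max_left 1 _) ht.1
    by_contra hcon
    push_neg at hcon
    exact absurd h1 (not_lt.mpr (ENNReal.ofReal_le_one.mpr hcon.le))
  unfold sIndex
  refine le_of_forall_pos_le_add fun ε hε => ?_
  obtain ⟨t, htmem, htlt⟩ := Real.lt_sInf_add_pos hSqne hε
  have hmem2 := htransfer t htmem
  have h1 := csInf_le hSp_bdd hmem2
  linarith

end
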